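/- Let k be a field of characteristic ≠ 2 and let A ∈ 𝒞(k). Then A possesses a Kleinian subfield. Moreover, if A is not associative, then the right nucleus N_r(A) is a Kleinian subfield of A, and it is the unique Kleinian subfield of A. -/

import Mathlib

open Module Function

variable {k : Type} [Field k]

/-- A Kleinian pair for a nonassociative `k`-algebra `(A, mul)`: a pair of distinct commuting
automorphisms, each of order 2. -/
def IsKleinPair {A : Type} [AddCommGroup A] [Module k A]
    (mul : A →ₗ[k] A →ₗ[k] A) (α β : A ≃ₗ[k] A) : Prop :=
  (∀ x y : A, α (mul x y) = mul (α x) (α y)) ∧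
  (∀ x y : A, β (mul x y) = mul (β x) (β y)) ∧
  (∀ x : A, α (α x) = x) ∧ (∀ x : A, β (β x) = x) ∧
  (∀ x : A, α (β x) = β (α x)) ∧
  α ≠ LinearEquiv.refl k A ∧ β ≠ LinearEquiv.refl k A ∧ α ≠ β

/-- The right nucleus `N_r(A) = {z | (x·y)·z = x·(y·z) ∀ x y}`. -/
def rightNucleusSet {A : Type} [AddCommGroup A] [Module k A]
    (mul : A →ₗ[k] A →ₗ[k] A) : Set A :=
  {z | ∀ x y : A, mul (mul x y) z = mul x (mul y z)}

/-- A Kleinian subfield of a unital nonassociative division algebra `(A, mul, one)`: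
a subalgebra which is a (commutative, associative) field containing the unity, contained in
the right nucleus, and equal to `E_β(1)` for some Kleinian pair `(α, β)` of `A`. -/
def IsKleinianSubfield {A : Type} [AddCommGroup A] [Module k A]
    (mul : A →ₗ[k] A →ₗ[k] A) (one : A) (S : Set A) : Prop :=
  one ∈ S ∧
  (∀ x ∈ S, ∀ y ∈ S, x + y ∈ S) ∧
  (∀ t : k, ∀ x ∈ S, t • x ∈ S) ∧
  (∀ x ∈ S, ∀ y ∈ S, mul x y ∈ S) ∧
  (∀ x ∈ S, ∀ y ∈ S, mul x y = mul y x) ∧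
  (∀ x ∈ S, ∀ y ∈ S, ∀ z ∈ S, mul (mul x y) z = mul x (mul y z)) ∧
  (∀ x ∈ S, x ≠ 0 → ∃ y ∈ S, mul x y = one) ∧
  S ⊆ rightNucleusSet mul ∧
  (∃ α β : A ≃ₗ[k] A, IsKleinPair mul α β ∧ S = {x : A | β x = x})

/-!
Automorphisms fix `1`, and a nontrivial involutive automorphism `β` splits `A` as
`E_β(1) ⊕ E_β(-1)`; left multiplication by a nonzero element of `E_β(-1)` swaps the two
summands, so `E_β(1)` is 2-dimensional, hence commutative, and a field as soon as it lies in
`N_r(A)` (for instance when `A` is associative).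

If `A` is not associative, pick `w ∉ N_r(A)`: then `N_r(A) ∩ w·N_r(A) = 0`, so
`N_r(A) = k1 ⊕ ku` is 2-dimensional. An automorphism maps `u` to a root of the quadratic
equation satisfied by `u` in the field `N_r(A)`, i.e. to `u` or to its conjugate; hence one of
`α`, `β`, `αβ` fixes `N_r(A)`, which by dimension is its whole fixed space. Any Kleinian
subfield is a 2-dimensional fixed space inside `N_r(A)`, so it equals `N_r(A)`.
-/

section Algebra

variable {A : Type} [AddCommGroup A] [Module k A] {mul : A →ₗ[k] A →ₗ[k] A} {one : A}

def HasNoZeroDivisors (mul : A →ₗ[k] A →ₗ[k] A) : Prop :=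
  ∀ a b : A, mul a b = 0 → a = 0 ∨ b = 0

def rightNucleus (mul : A →ₗ[k] A →ₗ[k] A) : Submodule k A where
  carrier := rightNucleusSet mul
  add_mem' ha hb x y := by simp only [map_add, ha x y, hb x y]
  zero_mem' x y := by simp only [map_zero]
  smul_mem' c z hz x y := by simp only [map_smul, hz x y]

theorem one_mem_rightNucleus (hone : ∀ x : A, mul x one = x) : one ∈ rightNucleus mul :=
  fun x y => by rw [hone, hone]

theorem mul_mem_rightNucleus {z w : A} (hz : z ∈ rightNucleus mul)
    (hw : w ∈ rightNucleus mul) : mul z w ∈ rightNucleus mul := fun x y =>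
  calc mul (mul x y) (mul z w) = mul (mul (mul x y) z) w := (hw _ _).symm
    _ = mul (mul x (mul y z)) w := by rw [hz x y]
    _ = mul x (mul y (mul z w)) := by rw [hw, hw]

theorem map_mem_rightNucleus (φ : A ≃ₗ[k] A) (hφ : ∀ x y, φ (mul x y) = mul (φ x) (φ y))
    {z : A} (hz : z ∈ rightNucleus mul) : φ z ∈ rightNucleus mul := by
  intro x y
  obtain ⟨x, rfl⟩ := φ.surjective x
  obtain ⟨y, rfl⟩ := φ.surjective y
  rw [← hφ, ← hφ, ← hφ, ← hφ, hz]

theorem map_one_of_map_mul (hone : ∀ x : A, mul one x = x ∧ mul x one = x) (φ : A ≃ₗ[k] A)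
    (hφ : ∀ x y, φ (mul x y) = mul (φ x) (φ y)) : φ one = one :=
  calc φ one = mul (φ one) (φ (φ.symm one)) := by rw [φ.apply_symm_apply, (hone _).2]
    _ = one := by rw [← hφ, (hone _).1, φ.apply_symm_apply]

theorem eq_of_mul_left_eq (hzd : HasNoZeroDivisors mul) {a x y : A} (ha : a ≠ 0)
    (h : mul a x = mul a y) : x = y := by
  rw [← sub_eq_zero, ← map_sub] at h
  exact sub_eq_zero.mp ((hzd _ _ h).resolve_left ha)

theorem exists_mul_eq_of_mem [FiniteDimensional k A] (hzd : HasNoZeroDivisors mul)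
    {S : Submodule k A} (hS : ∀ x ∈ S, ∀ y ∈ S, mul x y ∈ S) {x y : A} (hx : x ∈ S)
    (hx0 : x ≠ 0) (hy : y ∈ S) : ∃ z ∈ S, mul x z = y := by
  let f : S →ₗ[k] S := (mul x).restrict (hS x hx)
  have hf : Function.Injective f := fun _ _ h =>
    Subtype.ext (eq_of_mul_left_eq hzd hx0 (congrArg Subtype.val h))
  obtain ⟨z, hz⟩ := LinearMap.injective_iff_surjective.mp hf ⟨y, hy⟩
  exact ⟨z, z.2, congrArg Subtype.val hz⟩

theorem eq_or_add_eq_of_mul_self_eq (hzd : HasNoZeroDivisors mul)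
    (hone : ∀ x : A, mul x one = x) {u v : A} {a b : k}
    (hu : mul u u = a • one + b • u) (hv : mul v v = a • one + b • v)
    (hvu : mul v u = mul u v) : v = u ∨ v + u = b • one := by
  have hprod : mul (v - u) (v + u - b • one) = 0 := by
    simp only [map_sub, map_add, map_smul, LinearMap.sub_apply, hu, hv, hvu, hone]
    module
  exact (hzd _ _ hprod).imp sub_eq_zero.mp sub_eq_zero.mp

end Algebra

section Involution

open Module.End

variable {A : Type} [AddCommGroup A] [Module k A]

theorem isCompl_eigenspace_one_neg_one (hchar : (2 : k) ≠ 0) (β : End k A)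
    (hβ : ∀ x, β (β x) = x) : IsCompl (eigenspace β 1) (eigenspace β (-1)) := by
  refine ⟨(eigenspaces_iSupIndep β).pairwiseDisjoint (fun h : (1 : k) = -1 => hchar ?_), ?_⟩
  · linear_combination h
  refine codisjoint_iff.mpr (eq_top_iff.mpr fun x _ => ?_)
  have hx : x = (2 : k)⁻¹ • (x + β x) + (2 : k)⁻¹ • (x - β x) := by
    rw [← smul_add, add_add_sub_cancel, ← two_smul k, smul_smul, inv_mul_cancel₀ hchar,
      one_smul]
  rw [hx]
  refine Submodule.add_mem_sup ?_ ?_ <;> rw [mem_eigenspace_iff, map_smul]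
  · rw [map_add, hβ, add_comm, one_smul]
  · rw [map_sub, hβ, neg_one_smul, ← smul_neg, neg_sub]

theorem coe_eigenspace_one (γ : A ≃ₗ[k] A) :
    (eigenspace (γ : End k A) 1 : Set A) = {x | γ x = x} := by
  ext; simp

variable [FiniteDimensional k A] {mul : A →ₗ[k] A →ₗ[k] A}

theorem finrank_le_of_forall_mul_mem (hzd : HasNoZeroDivisors mul) {x : A} (hx : x ≠ 0)
    {p q : Submodule k A} (h : ∀ y ∈ p, mul x y ∈ q) : finrank k p ≤ finrank k q :=
  LinearMap.finrank_le_finrank_of_injective (f := (mul x).restrict h) fun _ _ hab =>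
    Subtype.ext (eq_of_mul_left_eq hzd hx (congrArg Subtype.val hab))

theorem two_mul_finrank_eigenspace_one (hchar : (2 : k) ≠ 0) (hzd : HasNoZeroDivisors mul)
    (β : A ≃ₗ[k] A) (hβ : ∀ x y, β (mul x y) = mul (β x) (β y))
    (hβ2 : ∀ x, β (β x) = x) (hβ1 : β ≠ LinearEquiv.refl k A) :
    2 * finrank k (eigenspace (β : End k A) 1) = finrank k A := by
  have hcompl := isCompl_eigenspace_one_neg_one hchar (β : End k A) hβ2
  obtain ⟨x, hx, hx0⟩ : ∃ x ∈ eigenspace (β : End k A) (-1), x ≠ 0 := by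
    refine (Submodule.ne_bot_iff _).mp fun h => hβ1 (LinearEquiv.ext fun y => ?_)
    rw [h] at hcompl
    have hy : y ∈ eigenspace (β : End k A) 1 := eq_top_of_isCompl_bot hcompl ▸ trivial
    simpa using mem_eigenspace_iff.mp hy
  rw [mem_eigenspace_iff] at hx
  have hswap : ∀ ε : k, ∀ y ∈ eigenspace (β : End k A) ε,
      mul x y ∈ eigenspace (β : End k A) (-ε) := by
    intro ε y hy
    rw [mem_eigenspace_iff] at hy ⊢
    simp only [LinearEquiv.coe_coe] at hx hy ⊢
    rw [hβ, hx, hy, map_smul, map_smul, LinearMap.smul_apply, smul_smul]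
    ring_nf
  have h1 := finrank_le_of_forall_mul_mem hzd hx0 (hswap 1)
  have h2 := finrank_le_of_forall_mul_mem hzd hx0 (hswap (-1))
  rw [neg_neg] at h2
  have := Submodule.finrank_add_eq_of_isCompl hcompl
  omega

end Involution

section Span

variable {A : Type} [AddCommGroup A] [Module k A]

theorem finrank_span_pair_eq_two {x y : A} (hx : x ≠ 0) (hy : y ∉ k ∙ x) :
    finrank k (Submodule.span k {x, y}) = 2 := by
  have hli : LinearIndependent k ![x, y] := (LinearIndependent.pair_iff' hx).mpr fun a h =>
    hy (Submodule.mem_span_singleton.mpr ⟨a, h⟩)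
  have h := finrank_span_eq_card hli
  rwa [Matrix.range_cons_cons_empty, Fintype.card_fin] at h

theorem eq_span_pair_of_finrank_le_two {S : Submodule k A} [FiniteDimensional k S] {x y : A}
    (hx : x ≠ 0) (hy : y ∉ k ∙ x) (hxS : x ∈ S) (hyS : y ∈ S) (hS : finrank k S ≤ 2) :
    Submodule.span k {x, y} = S :=
  Submodule.eq_of_le_of_finrank_le (Submodule.span_le.mpr (Set.insert_subset hxS
    (Set.singleton_subset_iff.mpr hyS))) (finrank_span_pair_eq_two hx hy ▸ hS)

theorem exists_eq_span_pair_of_finrank_eq_two {S : Submodule k A} [FiniteDimensional k S]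
    {x : A} (hx : x ≠ 0) (hxS : x ∈ S) (hS : finrank k S = 2) :
    ∃ y, Submodule.span k {x, y} = S := by
  have hlt : k ∙ x < S := by
    refine lt_of_le_of_ne ((Submodule.span_singleton_le_iff_mem x S).mpr hxS) fun h => ?_
    have := finrank_span_singleton (K := k) hx
    rw [h, hS] at this
    exact absurd this (by norm_num)
  obtain ⟨y, hyS, hy⟩ := SetLike.exists_of_lt hlt
  exact ⟨y, eq_span_pair_of_finrank_le_two hx hy hxS hyS hS.le⟩

variable {mul : A →ₗ[k] A →ₗ[k] A} {one : A}

theorem mul_comm_of_mem_span_pair (hone : ∀ x : A, mul one x = x ∧ mul x one = x) {u x y : A}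
    (hx : x ∈ Submodule.span k {one, u}) (hy : y ∈ Submodule.span k {one, u}) :
    mul x y = mul y x := by
  obtain ⟨a, b, rfl⟩ := Submodule.mem_span_pair.mp hx
  obtain ⟨c, d, rfl⟩ := Submodule.mem_span_pair.mp hy
  simp only [map_add, map_smul, LinearMap.add_apply, LinearMap.smul_apply, hone]
  module

theorem ne_zero_of_mul_one [Nontrivial A] (hone : ∀ x : A, mul x one = x) : one ≠ 0 := by
  obtain ⟨x, hx⟩ := exists_ne (0 : A)
  exact fun h => hx (by rw [← hone x, h, map_zero])

end Span

section Nucleus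

variable {A : Type} [AddCommGroup A] [Module k A] [FiniteDimensional k A]
  {mul : A →ₗ[k] A →ₗ[k] A} {one : A}

theorem rightNucleus_inf_map_mul_eq_bot (hzd : HasNoZeroDivisors mul)
    (hone : ∀ x : A, mul x one = x) {w : A} (hw : w ∉ rightNucleus mul) :
    rightNucleus mul ⊓ (rightNucleus mul).map (mul w) = ⊥ := by
  refine eq_bot_iff.mpr ?_
  rintro _ ⟨hv, z, hz, rfl⟩
  by_cases hz0 : z = 0
  · simp [hz0]
  obtain ⟨y, hy, hzy⟩ := exists_mul_eq_of_mem hzd (fun _ ha _ hb => mul_mem_rightNucleus ha hb)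
    hz hz0 (one_mem_rightNucleus hone)
  have hwy : mul (mul w z) y = w := by rw [hy, hzy, hone]
  exact absurd (hwy ▸ mul_mem_rightNucleus hv hy) hw

variable (hzd : HasNoZeroDivisors mul) (hone : ∀ x : A, mul x one = x)
  (hnassoc : ¬ ∀ x y z : A, mul (mul x y) z = mul x (mul y z))
include hzd hone hnassoc

theorem two_mul_finrank_rightNucleus_le : 2 * finrank k (rightNucleus mul) ≤ finrank k A := by
  simp only [not_forall] at hnassoc
  obtain ⟨x, y, w, hxyw⟩ := hnassoc
  have hw : w ∉ rightNucleus mul := fun h => hxyw (h x y)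
  have hw0 : w ≠ 0 := fun h => hw (h ▸ (rightNucleus mul).zero_mem)
  have hmap := finrank_le_of_forall_mul_mem hzd hw0 (q := (rightNucleus mul).map (mul w))
    fun z hz => Submodule.mem_map_of_mem hz
  have hsum := Submodule.finrank_sup_add_finrank_inf_eq (rightNucleus mul)
    ((rightNucleus mul).map (mul w))
  rw [rightNucleus_inf_map_mul_eq_bot hzd hone hw, finrank_bot] at hsum
  have := Submodule.finrank_le (rightNucleus mul ⊔ (rightNucleus mul).map (mul w))
  omega

variable (h4 : finrank k A = 4) {u : A} (hu : u ∈ rightNucleus mul) (hu1 : u ∉ k ∙ one)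
include h4 hu hu1

theorem span_pair_eq_rightNucleus : Submodule.span k {one, u} = rightNucleus mul := by
  have : Nontrivial A := Module.nontrivial_of_finrank_eq_succ h4
  refine eq_span_pair_of_finrank_le_two (ne_zero_of_mul_one hone) hu1
    (one_mem_rightNucleus hone) hu ?_
  have := two_mul_finrank_rightNucleus_le hzd hone hnassoc
  omega

theorem two_mul_finrank_rightNucleus_eq : 2 * finrank k (rightNucleus mul) = finrank k A := by
  have : Nontrivial A := Module.nontrivial_of_finrank_eq_succ h4
  rw [← span_pair_eq_rightNucleus hzd hone hnassoc h4 hu hu1,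
    finrank_span_pair_eq_two (ne_zero_of_mul_one hone) hu1, h4]

end Nucleus

section Klein

open Module.End

variable {A : Type} [AddCommGroup A] [Module k A] {mul : A →ₗ[k] A →ₗ[k] A} {one : A}

theorem IsKleinPair.symm {α β : A ≃ₗ[k] A} (h : IsKleinPair mul α β) :
    IsKleinPair mul β α :=
  let ⟨hα, hβ, hα2, hβ2, hαβ, hα1, hβ1, hne⟩ := h
  ⟨hβ, hα, hβ2, hα2, fun x => (hαβ x).symm, hβ1, hα1, hne.symm⟩

theorem IsKleinPair.trans {α β : A ≃ₗ[k] A} (h : IsKleinPair mul α β) :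
    IsKleinPair mul α (α.trans β) := by
  obtain ⟨hα, hβ, hα2, hβ2, hαβ, hα1, hβ1, hne⟩ := h
  refine ⟨hα, fun x y => ?_, hα2, fun x => ?_, fun x => hαβ (α x), hα1, fun h => hne ?_,
    fun h => hβ1 ?_⟩
  · simp only [LinearEquiv.trans_apply, hα, hβ]
  · simp only [LinearEquiv.trans_apply, ← hαβ, hα2, hβ2]
  · exact LinearEquiv.ext fun x => by simpa [hα2] using (LinearEquiv.congr_fun h (α x)).symm
  · exact LinearEquiv.ext fun x => by simpa using (LinearEquiv.congr_fun h (α.symm x)).symm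

theorem IsKleinPair.exists_kleinPair_apply_eq_self {α β : A ≃ₗ[k] A}
    (h : IsKleinPair mul α β) {u c : A} (hβc : β c = c) (hα : α u = u ∨ α u + u = c)
    (hβ : β u = u ∨ β u + u = c) :
    ∃ δ γ : A ≃ₗ[k] A, IsKleinPair mul δ γ ∧ γ u = u := by
  rcases hβ with hβ | hβ
  · exact ⟨α, β, h, hβ⟩
  rcases hα with hα | hα
  · exact ⟨β, α, h.symm, hα⟩
  refine ⟨α, α.trans β, h.trans, ?_⟩
  rw [LinearEquiv.trans_apply, eq_sub_of_add_eq hα, map_sub, hβc, ← hβ, add_sub_cancel_left]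

theorem IsKleinPair.exists_rightNucleus_le_eigenspace (hzd : HasNoZeroDivisors mul)
    (hone : ∀ x : A, mul one x = x ∧ mul x one = x) {u : A}
    (hN : Submodule.span k {one, u} = rightNucleus mul) {α β : A ≃ₗ[k] A}
    (h : IsKleinPair mul α β) :
    ∃ δ γ : A ≃ₗ[k] A, IsKleinPair mul δ γ ∧
      rightNucleus mul ≤ eigenspace (γ : End k A) 1 := by
  have ⟨hα, hβ, _⟩ := h
  have hu : u ∈ rightNucleus mul := hN ▸ Submodule.subset_span (by simp)
  obtain ⟨a, b, hab⟩ := Submodule.mem_span_pair.mp (hN ▸ mul_mem_rightNucleus hu hu)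
  have hroot : ∀ φ : A ≃ₗ[k] A, (∀ x y, φ (mul x y) = mul (φ x) (φ y)) →
      φ u = u ∨ φ u + u = b • one := fun φ hφ =>
    eq_or_add_eq_of_mul_self_eq hzd (fun x => (hone x).2) hab.symm
      (by rw [← hφ, ← hab, map_add, map_smul, map_smul, map_one_of_map_mul hone φ hφ])
      (mul_comm_of_mem_span_pair hone (hN ▸ map_mem_rightNucleus φ hφ hu) (hN ▸ hu))
  have hβc : β (b • one) = b • one := by rw [map_smul, map_one_of_map_mul hone β hβ]
  obtain ⟨δ, γ, hδγ, hγu⟩ :=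
    h.exists_kleinPair_apply_eq_self hβc (hroot α hα) (hroot β hβ)
  refine ⟨δ, γ, hδγ, hN ▸ Submodule.span_le.mpr ?_⟩
  rintro _ (rfl | rfl) <;> rw [SetLike.mem_coe, mem_eigenspace_iff, one_smul]
  exacts [map_one_of_map_mul hone γ hδγ.2.1, hγu]

end Klein

section Subfield

open Module.End

variable {A : Type} [AddCommGroup A] [Module k A] [FiniteDimensional k A]
  {mul : A →ₗ[k] A →ₗ[k] A} {one : A}

theorem IsKleinPair.two_mul_finrank_eigenspace_one (hchar : (2 : k) ≠ 0)
    (hzd : HasNoZeroDivisors mul) {α β : A ≃ₗ[k] A} (h : IsKleinPair mul α β) :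
    2 * finrank k (eigenspace (β : End k A) 1) = finrank k A :=
  let ⟨_, hβ, _, hβ2, _, _, hβ1, _⟩ := h
  _root_.two_mul_finrank_eigenspace_one hchar hzd β hβ hβ2 hβ1

theorem isKleinianSubfield_eigenspace (hchar : (2 : k) ≠ 0) (h4 : finrank k A = 4)
    (hzd : HasNoZeroDivisors mul) (hone : ∀ x : A, mul one x = x ∧ mul x one = x)
    {δ γ : A ≃ₗ[k] A} (h : IsKleinPair mul δ γ)
    (hN : eigenspace (γ : End k A) 1 ≤ rightNucleus mul) :
    IsKleinianSubfield mul one {x | γ x = x} := by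
  have : Nontrivial A := Module.nontrivial_of_finrank_eq_succ h4
  have hfin := h.two_mul_finrank_eigenspace_one hchar hzd
  set E := eigenspace (γ : End k A) 1
  have hE : ∀ {x}, x ∈ E ↔ γ x = x := by simp [E]
  have ⟨_, hγ, _⟩ := h
  have hone_mem : one ∈ E := hE.mpr (map_one_of_map_mul hone γ hγ)
  have hmul_mem : ∀ x ∈ E, ∀ y ∈ E, mul x y ∈ E := fun x hx y hy => by
    rw [hE] at hx hy ⊢; rw [hγ, hx, hy]
  obtain ⟨u, hu⟩ := exists_eq_span_pair_of_finrank_eq_two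
    (ne_zero_of_mul_one fun x => (hone x).2) hone_mem (by omega)
  rw [← coe_eigenspace_one]
  exact ⟨hone_mem, fun _ hx _ hy => E.add_mem hx hy, fun t _ hx => E.smul_mem t hx, hmul_mem,
    fun x hx y hy => mul_comm_of_mem_span_pair hone (hu.ge hx) (hu.ge hy),
    fun _ _ _ _ _ hz => hN hz _ _,
    fun _ hx hx0 => exists_mul_eq_of_mem hzd hmul_mem hx hx0 hone_mem, hN,
    δ, γ, h, coe_eigenspace_one γ⟩

theorem IsKleinianSubfield.eq_rightNucleusSet (hchar : (2 : k) ≠ 0)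
    (hzd : HasNoZeroDivisors mul) (hN : 2 * finrank k (rightNucleus mul) ≤ finrank k A)
    {S : Set A} (hS : IsKleinianSubfield mul one S) : S = rightNucleusSet mul := by
  obtain ⟨-, -, -, -, -, -, -, hSN, α, β, h, rfl⟩ := hS
  rw [← coe_eigenspace_one] at hSN ⊢
  have hle : eigenspace (β : End k A) 1 ≤ rightNucleus mul := hSN
  have := h.two_mul_finrank_eigenspace_one hchar hzd
  exact congrArg SetLike.coe (Submodule.eq_of_le_of_finrank_le hle (by omega))

end Subfield

/-- Let `k` be a field of characteristic ≠ 2 and `A ∈ 𝒞(k)`. Then `A`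
possesses a Kleinian subfield. Moreover, if `A` is not associative, then the right nucleus
`N_r(A)` is a Kleinian subfield of `A`, and it is the unique Kleinian subfield of `A`. -/
theorem exists_kleinianSubfield (hchar : (2 : k) ≠ 0)
    (A : Type) [AddCommGroup A] [Module k A] [FiniteDimensional k A]
    (mul : A →ₗ[k] A →ₗ[k] A) (one : A)
    (h4 : finrank k A = 4)
    (hone : ∀ x : A, mul one x = x ∧ mul x one = x)
    (hdiv : ∀ a : A, a ≠ 0 →
      Function.Bijective (fun x => mul a x) ∧ Function.Bijective (fun x => mul x a))
    (hproper : Set.range (fun s : k => s • one) ⊂ rightNucleusSet mul)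
    (hkl : ∃ α β : A ≃ₗ[k] A, IsKleinPair mul α β) :
    (∃ S : Set A, IsKleinianSubfield mul one S) ∧
    ((¬ ∀ x y z : A, mul (mul x y) z = mul x (mul y z)) →
      IsKleinianSubfield mul one (rightNucleusSet mul) ∧
      ∀ S : Set A, IsKleinianSubfield mul one S → S = rightNucleusSet mul) := by
  obtain ⟨α, β, hαβ⟩ := hkl
  have hzd : HasNoZeroDivisors mul := fun a b hab =>
    or_iff_not_imp_left.mpr fun ha => (hdiv a ha).1.1 (hab.trans (map_zero (mul a)).symm)
  by_cases hassoc : ∀ x y z : A, mul (mul x y) z = mul x (mul y z)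
  · exact ⟨⟨_, isKleinianSubfield_eigenspace hchar h4 hzd hone hαβ
      fun z _ x y => hassoc x y z⟩, fun h => absurd hassoc h⟩
  obtain ⟨u, hu, hu1⟩ := Set.exists_of_ssubset hproper
  have hu1 : u ∉ k ∙ one := fun h => hu1 (Submodule.mem_span_singleton.mp h)
  have hone' : ∀ x, mul x one = x := fun x => (hone x).2
  have hN2 := two_mul_finrank_rightNucleus_eq hzd hone' hassoc h4 hu hu1
  obtain ⟨δ, γ, hδγ, hle⟩ := hαβ.exists_rightNucleus_le_eigenspace hzd hone
    (span_pair_eq_rightNucleus hzd hone' hassoc h4 hu hu1)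
  have hγ := hδγ.two_mul_finrank_eigenspace_one hchar hzd
  have hNγ : rightNucleus mul = Module.End.eigenspace (γ : Module.End k A) 1 :=
    Submodule.eq_of_le_of_finrank_le hle (by omega)
  have hK := isKleinianSubfield_eigenspace hchar h4 hzd hone hδγ hNγ.ge
  rw [← coe_eigenspace_one, ← hNγ] at hK
  exact ⟨⟨_, hK⟩, fun _ => ⟨hK, fun S hS => hS.eq_rightNucleusSet hchar hzd hN2.le⟩⟩
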